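/- Let 0 < ε < 2, and set π_1 = 1 + ε, π_2 = ε, and ν = (4 − 2ε)/√(ε·(1 + ε)). Then the Davidson maximum-likelihood equations for the data w_12 = 1 + ε, w_21 = ε, t_12 = 4 − 2ε (so s_1 = 3, s_2 = 2, n = 5, T = 4 − 2ε) hold: 3/π_1 = 5·(1 + (ν/2)·√(π_2/π_1))/(π_1 + π_2 + ν·√(π_1·π_2)), 2/π_2 = 5·(1 + (ν/2)·√(π_1/π_2))/(π_1 + π_2 + ν·√(π_1·π_2)), and (4 − 2ε)/ν = 5·√(π_1·π_2)/(π_1 + π_2 + ν·√(π_1·π_2)). Moreover the resulting model probabilities are p_12 = π_1/(π_1 + π_2 + ν√(π_1π_2)) = (1 + ε)/5, p_21 = π_2/(π_1 + π_2 + ν√(π_1π_2)) = ε/5, and d_12 = ν√(π_1π_2)/(π_1 + π_2 + ν√(π_1π_2)) = (4 − 2ε)/5. -/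

import Mathlib

/-- Test case 1 for the Davidson model: the given parameters satisfy the
maximum-likelihood equations and yield the stated model probabilities. -/
theorem davidson_test_case (ε : ℝ) (hε0 : 0 < ε) (hε2 : ε < 2)
    (π₁ π₂ ν : ℝ) (hπ₁ : π₁ = 1 + ε) (hπ₂ : π₂ = ε)
    (hν : ν = (4 - 2 * ε) / Real.sqrt (ε * (1 + ε))) :
    3 / π₁ = 5 * (1 + (ν / 2) * Real.sqrt (π₂ / π₁)) /
        (π₁ + π₂ + ν * Real.sqrt (π₁ * π₂)) ∧
      2 / π₂ = 5 * (1 + (ν / 2) * Real.sqrt (π₁ / π₂)) /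
        (π₁ + π₂ + ν * Real.sqrt (π₁ * π₂)) ∧
      (4 - 2 * ε) / ν = 5 * Real.sqrt (π₁ * π₂) /
        (π₁ + π₂ + ν * Real.sqrt (π₁ * π₂)) ∧
      π₁ / (π₁ + π₂ + ν * Real.sqrt (π₁ * π₂)) = (1 + ε) / 5 ∧
      π₂ / (π₁ + π₂ + ν * Real.sqrt (π₁ * π₂)) = ε / 5 ∧
      ν * Real.sqrt (π₁ * π₂) / (π₁ + π₂ + ν * Real.sqrt (π₁ * π₂))
        = (4 - 2 * ε) / 5 := by
  have h1ε : (0:ℝ) < 1 + ε := by linarith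
  have ha0 : 0 < Real.sqrt ε := Real.sqrt_pos.mpr hε0
  have hb0 : 0 < Real.sqrt (1 + ε) := Real.sqrt_pos.mpr h1ε
  have ha2 : Real.sqrt ε ^ 2 = ε := Real.sq_sqrt hε0.le
  have hb2 : Real.sqrt (1 + ε) ^ 2 = 1 + ε := Real.sq_sqrt h1ε.le
  set a := Real.sqrt ε with ha
  set b := Real.sqrt (1 + ε) with hb
  have hmul : Real.sqrt (ε * (1 + ε)) = a * b := Real.sqrt_mul hε0.le _
  have hmul' : Real.sqrt ((1 + ε) * ε) = b * a := Real.sqrt_mul h1ε.le _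
  have hdiv1 : Real.sqrt (ε / (1 + ε)) = a / b := Real.sqrt_div hε0.le _
  have hdiv2 : Real.sqrt ((1 + ε) / ε) = b / a := Real.sqrt_div h1ε.le _
  have hν4 : (0:ℝ) < 4 - 2 * ε := by linarith
  have hb2' : b ^ 2 = 1 + a ^ 2 := by rw [ha2, hb2]
  rw [hπ₁, hπ₂, hν, hmul, hmul', hdiv1, hdiv2]
  rw [← ha2, ← hb2']
  have hν4' : (4:ℝ) - 2 * a ^ 2 ≠ 0 := by rw [ha2]; exact hν4.ne'
  have hden : b ^ 2 + a ^ 2 + (4 - 2 * a ^ 2) / (a * b) * (b * a) = 5 := by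
    field_simp
    linear_combination hb2'
  rw [hden]
  refine ⟨?_, ?_, ?_, ?_, ?_, ?_⟩
  · field_simp
    ring_nf
    linear_combination (-2) * hb2'
  · field_simp
    ring
  · field_simp
  · field_simp
  · field_simp
  · field_simp
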